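/- arXiv:0908.2959 — 5 statements merged into one kernel-verified Lean document; each statement's English description precedes it below -/
import Mathlib

section
/- Let C be a coalgebra, N a (C,C)-bicomodule, and γ: N → k a linear functional. Then the map β: C ⋊ N → C defined by β(c,n) = c − n_{<-1>} γ(n_{<0>}) + γ(n_{[0]}) n_{[1]} is a morphism of coalgebras from the trivial coextension C ⋊ N to C. -/
/-!
Write `β = fst + D ∘ snd` with `D n = γ(n₍₀₎) n₍₁₎ - n₍₋₁₎ γ(n₍₀₎)`. Such a map out of `C ⋊ N`
respects the counit iff `ε ∘ D = 0`, and the comultiplication iff `D` is a coderivation,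
`Δ (D n) = n₍₋₁₎ ⊗ D n₍₀₎ + D n₍₀₎ ⊗ n₍₁₎`. The counit axioms of the two coactions give
`ε ∘ D = γ - γ = 0`. Coassociativity of each coaction makes each contraction a one-sided
coderivation, and the bicomodule compatibility makes the two mixed terms
`n₍₋₁₎ ⊗ γ(n₍₀₎₍₀₎) n₍₀₎₍₁₎` and `n₍₀₎₍₋₁₎ γ(n₍₀₎₍₀₎) ⊗ n₍₁₎` coincide, so they cancel in `D`.
-/

open TensorProduct LinearMap

namespace TrivialCoextension

section Semiring

variable {R C N : Type*} [CommSemiring R] [AddCommMonoid C] [Module R C]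
  [AddCommMonoid N] [Module R N]

/-- `n ↦ n₍₋₁₎ γ(n₍₀₎)` for the left coaction `ρl n = n₍₋₁₎ ⊗ n₍₀₎`. -/
def leftContract (γ : N →ₗ[R] R) (ρl : N →ₗ[R] C ⊗[R] N) : N →ₗ[R] C :=
  (TensorProduct.rid R C).toLinearMap ∘ₗ lTensor C γ ∘ₗ ρl

/-- `n ↦ γ(n₍₀₎) n₍₁₎` for the right coaction `ρr n = n₍₀₎ ⊗ n₍₁₎`. -/
def rightContract (γ : N →ₗ[R] R) (ρr : N →ₗ[R] N ⊗[R] C) : N →ₗ[R] C :=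
  (TensorProduct.lid R C).toLinearMap ∘ₗ rTensor C γ ∘ₗ ρr

variable (γ : N →ₗ[R] R) (ρl : N →ₗ[R] C ⊗[R] N) (ρr : N →ₗ[R] N ⊗[R] C)

theorem lTensor_rightContract_comp_eq_rTensor_leftContract_comp
    (hcompat : lTensor C ρr ∘ₗ ρl
      = (TensorProduct.assoc R C N C).toLinearMap ∘ₗ rTensor C ρl ∘ₗ ρr) :
    lTensor C (rightContract γ ρr) ∘ₗ ρl = rTensor C (leftContract γ ρl) ∘ₗ ρr := by
  have hnat : lTensor C ((TensorProduct.lid R C).toLinearMap ∘ₗ rTensor C γ)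
        ∘ₗ (TensorProduct.assoc R C N C).toLinearMap
      = rTensor C ((TensorProduct.rid R C).toLinearMap ∘ₗ lTensor C γ) := by
    apply TensorProduct.ext_threefold
    intro c n d
    simp [smul_tmul', tmul_smul]
  calc lTensor C (rightContract γ ρr) ∘ₗ ρl
      = lTensor C ((TensorProduct.lid R C).toLinearMap ∘ₗ rTensor C γ) ∘ₗ lTensor C ρr ∘ₗ ρl := by
        rw [← comp_assoc, ← lTensor_comp]; rfl
    _ = rTensor C ((TensorProduct.rid R C).toLinearMap ∘ₗ lTensor C γ) ∘ₗ rTensor C ρl ∘ₗ ρr := by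
      rw [hcompat, ← hnat]; simp only [comp_assoc]
    _ = rTensor C (leftContract γ ρl) ∘ₗ ρr := by rw [← comp_assoc, ← rTensor_comp]; rfl

variable [CoalgebraStruct R C]

theorem counit_comp_leftContract
    (hcounit : ∀ n : N, TensorProduct.lid R N (rTensor N Coalgebra.counit (ρl n)) = n) :
    Coalgebra.counit ∘ₗ leftContract γ ρl = γ := by
  have hswap : Coalgebra.counit ∘ₗ (TensorProduct.rid R C).toLinearMap ∘ₗ lTensor C γ
      = γ ∘ₗ (TensorProduct.lid R N).toLinearMap ∘ₗ rTensor N (Coalgebra.counit (R := R)) := by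
    ext c n
    simp [mul_comm]
  ext n
  simpa [leftContract, hcounit] using LinearMap.congr_fun hswap (ρl n)

theorem counit_comp_rightContract
    (hcounit : ∀ n : N, TensorProduct.rid R N (lTensor N Coalgebra.counit (ρr n)) = n) :
    Coalgebra.counit ∘ₗ rightContract γ ρr = γ := by
  have hswap : Coalgebra.counit ∘ₗ (TensorProduct.lid R C).toLinearMap ∘ₗ rTensor C γ
      = γ ∘ₗ (TensorProduct.rid R N).toLinearMap ∘ₗ lTensor N (Coalgebra.counit (R := R)) := by
    ext n c
    simp [mul_comm]
  ext n
  simpa [rightContract, hcounit] using LinearMap.congr_fun hswap (ρr n)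

theorem comul_comp_leftContract
    (hcoassoc : (TensorProduct.assoc R C C N).toLinearMap ∘ₗ rTensor N Coalgebra.comul ∘ₗ ρl
      = lTensor C ρl ∘ₗ ρl) :
    Coalgebra.comul ∘ₗ leftContract γ ρl = lTensor C (leftContract γ ρl) ∘ₗ ρl := by
  have hnat : Coalgebra.comul ∘ₗ (TensorProduct.rid R C).toLinearMap ∘ₗ lTensor C γ
      = lTensor C ((TensorProduct.rid R C).toLinearMap ∘ₗ lTensor C γ)
        ∘ₗ (TensorProduct.assoc R C C N).toLinearMap ∘ₗ rTensor N Coalgebra.comul := by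
    ext c n
    simp only [AlgebraTensorModule.curry_apply, curry_apply, restrictScalars_apply, coe_comp,
      LinearEquiv.coe_coe, Function.comp_apply, lTensor_tmul, rid_tmul, map_smul, rTensor_tmul]
    induction Coalgebra.comul (R := R) c using TensorProduct.induction_on with
    | zero => simp
    | tmul a b => simp [tmul_smul]
    | add x y hx hy => simp only [smul_add, hx, hy, add_tmul, map_add]
  calc Coalgebra.comul ∘ₗ leftContract γ ρl
      = (Coalgebra.comul ∘ₗ (TensorProduct.rid R C).toLinearMap ∘ₗ lTensor C γ) ∘ₗ ρl := rfl
    _ = lTensor C ((TensorProduct.rid R C).toLinearMap ∘ₗ lTensor C γ) ∘ₗ lTensor C ρl ∘ₗ ρl := by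
      rw [hnat, ← hcoassoc]; simp only [comp_assoc]
    _ = lTensor C (leftContract γ ρl) ∘ₗ ρl := by rw [← comp_assoc, ← lTensor_comp]; rfl

theorem comul_comp_rightContract
    (hcoassoc : (TensorProduct.assoc R N C C).toLinearMap ∘ₗ rTensor C ρr ∘ₗ ρr
      = lTensor N Coalgebra.comul ∘ₗ ρr) :
    Coalgebra.comul ∘ₗ rightContract γ ρr = rTensor C (rightContract γ ρr) ∘ₗ ρr := by
  have hnat : Coalgebra.comul ∘ₗ (TensorProduct.lid R C).toLinearMap ∘ₗ rTensor C γ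
      = rTensor C ((TensorProduct.lid R C).toLinearMap ∘ₗ rTensor C γ)
        ∘ₗ (TensorProduct.assoc R N C C).symm.toLinearMap ∘ₗ lTensor N Coalgebra.comul := by
    ext n c
    simp only [AlgebraTensorModule.curry_apply, curry_apply, restrictScalars_apply, coe_comp,
      LinearEquiv.coe_coe, Function.comp_apply, rTensor_tmul, lid_tmul, map_smul, lTensor_tmul]
    induction Coalgebra.comul (R := R) c using TensorProduct.induction_on with
    | zero => simp
    | tmul a b => simp [smul_tmul']
    | add x y hx hy => simp only [smul_add, hx, hy, tmul_add, map_add]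
  calc Coalgebra.comul ∘ₗ rightContract γ ρr
      = (Coalgebra.comul ∘ₗ (TensorProduct.lid R C).toLinearMap ∘ₗ rTensor C γ) ∘ₗ ρr := rfl
    _ = rTensor C ((TensorProduct.lid R C).toLinearMap ∘ₗ rTensor C γ) ∘ₗ rTensor C ρr ∘ₗ ρr := by
      rw [hnat, comp_assoc, comp_assoc, ← hcoassoc, LinearEquiv.symm_comp_assoc]
    _ = rTensor C (rightContract γ ρr) ∘ₗ ρr := by rw [← comp_assoc, ← rTensor_comp]; rfl

def IsCoderivation (ρl : N →ₗ[R] C ⊗[R] N) (ρr : N →ₗ[R] N ⊗[R] C) (D : N →ₗ[R] C) : Prop :=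
  Coalgebra.comul ∘ₗ D = lTensor C D ∘ₗ ρl + rTensor C D ∘ₗ ρr

def trivialCoextensionComul (ρl : N →ₗ[R] C ⊗[R] N) (ρr : N →ₗ[R] N ⊗[R] C) :
    (C × N) →ₗ[R] (C × N) ⊗[R] (C × N) :=
  TensorProduct.map (inl R C N) (inl R C N) ∘ₗ Coalgebra.comul ∘ₗ fst R C N
    + TensorProduct.map (inl R C N) (inr R C N) ∘ₗ ρl ∘ₗ snd R C N
    + TensorProduct.map (inr R C N) (inl R C N) ∘ₗ ρr ∘ₗ snd R C N

theorem map_fst_add_comp_snd_comp_trivialCoextensionComul (D : N →ₗ[R] C) :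
    TensorProduct.map (fst R C N + D ∘ₗ snd R C N) (fst R C N + D ∘ₗ snd R C N)
        ∘ₗ trivialCoextensionComul ρl ρr
      = Coalgebra.comul ∘ₗ fst R C N + (lTensor C D ∘ₗ ρl + rTensor C D ∘ₗ ρr) ∘ₗ snd R C N := by
  have hinl : (fst R C N + D ∘ₗ snd R C N) ∘ₗ inl R C N = LinearMap.id := by
    simp [add_comp, comp_assoc]
  have hinr : (fst R C N + D ∘ₗ snd R C N) ∘ₗ inr R C N = D := by
    simp [add_comp, comp_assoc]
  simp only [trivialCoextensionComul, comp_add, ← comp_assoc, ← TensorProduct.map_comp, hinl, hinr,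
    TensorProduct.map_id, id_comp, add_comp, add_assoc]
  rfl

end Semiring

section Ring

variable {R C N : Type*} [CommRing R] [AddCommGroup C] [Module R C] [AddCommGroup N] [Module R N]
  [CoalgebraStruct R C] (γ : N →ₗ[R] R) (ρl : N →ₗ[R] C ⊗[R] N) (ρr : N →ₗ[R] N ⊗[R] C)

theorem isCoderivation_rightContract_sub_leftContract
    (hlcoassoc : (TensorProduct.assoc R C C N).toLinearMap ∘ₗ rTensor N Coalgebra.comul ∘ₗ ρl
      = lTensor C ρl ∘ₗ ρl)
    (hrcoassoc : (TensorProduct.assoc R N C C).toLinearMap ∘ₗ rTensor C ρr ∘ₗ ρr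
      = lTensor N Coalgebra.comul ∘ₗ ρr)
    (hcompat : lTensor C ρr ∘ₗ ρl
      = (TensorProduct.assoc R C N C).toLinearMap ∘ₗ rTensor C ρl ∘ₗ ρr) :
    IsCoderivation ρl ρr (rightContract γ ρr - leftContract γ ρl) := by
  have hmixed := lTensor_rightContract_comp_eq_rTensor_leftContract_comp γ ρl ρr hcompat
  rw [IsCoderivation, comp_sub, comul_comp_leftContract γ ρl hlcoassoc,
    comul_comp_rightContract γ ρr hrcoassoc, lTensor_sub, rTensor_sub, sub_comp, sub_comp, hmixed]
  abel

end Ring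

end TrivialCoextension

open TrivialCoextension

/-- For a coalgebra `C`, a `(C,C)`-bicomodule `N` and a linear
functional `γ : N → k`, the map `β : C ⋊ N → C`,
`β(c,n) = c − n₍₋₁₎ γ(n₍₀₎) + γ(n₍₀₎) n₍₁₎`, is a morphism of coalgebras
from the trivial coextension `C ⋊ N` to `C`. -/
theorem trivial_coextension_beta_is_coalgebra_map
    {k : Type*} [Field k]
    {C : Type*} [AddCommGroup C] [Module k C] [Coalgebra k C]
    {N : Type*} [AddCommGroup N] [Module k N]
    (ρl : N →ₗ[k] C ⊗[k] N)
    (hlcounit : ∀ n : N, (TensorProduct.lid k N)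
      ((LinearMap.rTensor N (Coalgebra.counit (R := k) (A := C))) (ρl n)) = n)
    (hlcoassoc : (TensorProduct.assoc k C C N).toLinearMap ∘ₗ
        LinearMap.rTensor N (Coalgebra.comul (R := k) (A := C)) ∘ₗ ρl
      = LinearMap.lTensor C ρl ∘ₗ ρl)
    (ρr : N →ₗ[k] N ⊗[k] C)
    (hrcounit : ∀ n : N, (TensorProduct.rid k N)
      ((LinearMap.lTensor N (Coalgebra.counit (R := k) (A := C))) (ρr n)) = n)
    (hrcoassoc : (TensorProduct.assoc k N C C).toLinearMap ∘ₗ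
        LinearMap.rTensor C ρr ∘ₗ ρr
      = LinearMap.lTensor N (Coalgebra.comul (R := k) (A := C)) ∘ₗ ρr)
    (hcompat : LinearMap.lTensor C ρr ∘ₗ ρl
      = (TensorProduct.assoc k C N C).toLinearMap ∘ₗ LinearMap.rTensor C ρl ∘ₗ ρr)
    -- the trivial coextension structure on C ⊕ N
    (Δ : (C × N) →ₗ[k] (C × N) ⊗[k] (C × N))
    (hΔ : Δ =
      TensorProduct.map (LinearMap.inl k C N) (LinearMap.inl k C N) ∘ₗ
        Coalgebra.comul ∘ₗ LinearMap.fst k C N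
      + TensorProduct.map (LinearMap.inl k C N) (LinearMap.inr k C N) ∘ₗ
        ρl ∘ₗ LinearMap.snd k C N
      + TensorProduct.map (LinearMap.inr k C N) (LinearMap.inl k C N) ∘ₗ
        ρr ∘ₗ LinearMap.snd k C N)
    (ε : (C × N) →ₗ[k] k)
    (hε : ε = Coalgebra.counit ∘ₗ LinearMap.fst k C N)
    -- an arbitrary linear functional γ ∈ N*
    (γ : N →ₗ[k] k)
    -- the map β(c,n) = c − n₍₋₁₎ γ(n₍₀₎) + γ(n₍₀₎) n₍₁₎
    (β : (C × N) →ₗ[k] C)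
    (hβ : β = LinearMap.fst k C N
      - (TensorProduct.rid k C).toLinearMap ∘ₗ LinearMap.lTensor C γ ∘ₗ
          ρl ∘ₗ LinearMap.snd k C N
      + (TensorProduct.lid k C).toLinearMap ∘ₗ LinearMap.rTensor C γ ∘ₗ
          ρr ∘ₗ LinearMap.snd k C N) :
    Coalgebra.counit (R := k) (A := C) ∘ₗ β = ε
    ∧ TensorProduct.map β β ∘ₗ Δ = Coalgebra.comul ∘ₗ β := by
  have hβD : β = fst k C N + (rightContract γ ρr - leftContract γ ρl) ∘ₗ snd k C N := by
    rw [hβ, sub_comp]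
    change _ - leftContract γ ρl ∘ₗ _ + rightContract γ ρr ∘ₗ _ = _
    abel
  have hΔ' : Δ = trivialCoextensionComul ρl ρr := hΔ
  have hcounit : Coalgebra.counit ∘ₗ (rightContract γ ρr - leftContract γ ρl) = 0 := by
    rw [comp_sub, counit_comp_rightContract γ ρr hrcounit, counit_comp_leftContract γ ρl hlcounit,
      sub_self]
  have hcoder := isCoderivation_rightContract_sub_leftContract γ ρl ρr hlcoassoc hrcoassoc hcompat
  constructor
  · rw [hβD, hε, comp_add, ← comp_assoc, hcounit, zero_comp, add_zero]
  · rw [hβD, hΔ', map_fst_add_comp_snd_comp_trivialCoextensionComul, ← hcoder, comp_add,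
      comp_assoc]
end

section
/- Let φ: C → D be a coalgebra map satisfying Σ ε(aⁱ) bⁱ = Σ aⁱ ε(bⁱ) for all Σ aⁱ ⊗ bⁱ ∈ C □_D C. Then for every right C-comodule M, the map ν_M: M □_D C → M, ν_M(Σ mⁱ ⊗ cⁱ) = Σ mⁱ ε(cⁱ), is a morphism of right C-comodules, where M □_D C carries the right C-comodule structure Σ mⁱ ⊗ cⁱ ↦ Σ (mⁱ ⊗ cⁱ_{(1)}) ⊗ cⁱ_{(2)}. -/
open TensorProduct LinearMap

/-!
For `x ∈ M □_D C`, coassociativity of `ρ` makes `(ρ ⊗ C) x` lie in the kernel of `M ⊗ g`, where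
`C □_D C = ker g`; since `M` is flat over a field, that kernel is `M ⊗ (C □_D C)`. The counit
symmetry says `ε ⊗ C - C ⊗ ε` vanishes on `C □_D C`, so `M ⊗ (ε ⊗ C - C ⊗ ε)` kills `(ρ ⊗ C) x`,
and by the counit axiom of `M` this image is `x - ρ (ν x)`. Hence `ρ (ν x) = x`, while
`(ν ⊗ C) (σ x) = x` holds for every `x` by the counit axiom of `C`.
-/

theorem LinearMap.lTensor_apply_eq_zero_of_ker_le {R : Type*} [CommRing R]
    {M V W U : Type*} [AddCommGroup M] [Module R M] [Module.Flat R M]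
    [AddCommGroup V] [Module R V] [AddCommGroup W] [Module R W] [AddCommGroup U] [Module R U]
    {g : V →ₗ[R] W} {h : V →ₗ[R] U} (hgh : ker g ≤ ker h) {y : M ⊗[R] V}
    (hy : lTensor M g y = 0) : lTensor M h y = 0 := by
  obtain ⟨z, rfl⟩ := (Module.Flat.lTensor_exact M (exact_subtype_ker_map g) y).mp hy
  have hzero : h ∘ₗ (ker g).subtype = 0 := by
    ext v
    exact hgh v.2
  rw [← comp_apply, ← lTensor_comp, hzero, lTensor_zero, zero_apply]

theorem rTensor_counit_assoc_symm_lTensor_comul {R : Type*} [CommSemiring R]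
    {M C : Type*} [AddCommMonoid M] [Module R M] [AddCommMonoid C] [Module R C]
    [Coalgebra R C] (x : M ⊗[R] C) :
    rTensor C ((TensorProduct.rid R M).toLinearMap ∘ₗ lTensor M Coalgebra.counit)
      ((TensorProduct.assoc R M C C).symm (lTensor M Coalgebra.comul x)) = x := by
  have hw (m : M) (w : C ⊗[R] C) :
      rTensor C ((TensorProduct.rid R M).toLinearMap ∘ₗ lTensor M Coalgebra.counit)
        ((TensorProduct.assoc R M C C).symm (m ⊗ₜ w))
      = m ⊗ₜ TensorProduct.lid R C (rTensor C Coalgebra.counit w) := by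
    induction w using TensorProduct.induction_on with
    | zero => simp
    | add v w hv hw => simp only [tmul_add, map_add, hv, hw]
    | tmul a b => simp [TensorProduct.smul_tmul]
  induction x using TensorProduct.induction_on with
  | zero => simp
  | add x y hx hy => simp only [map_add, hx, hy]
  | tmul m c => rw [lTensor_tmul, hw, Coalgebra.rTensor_counit_comul, lid_tmul, one_smul]

section Cotensor

variable {R : Type*} [CommRing R] {M C D : Type*}
  [AddCommGroup M] [Module R M] [AddCommGroup C] [Module R C] [AddCommGroup D] [Module R D]

/-- `M □_D C` is the kernel of `cotensorDiff ρ Coalgebra.comul φ`: it equalizes the two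
`D`-coactions. -/
def cotensorDiff (ρ : M →ₗ[R] M ⊗[R] C) (Δ : C →ₗ[R] C ⊗[R] C) (f : C →ₗ[R] D) :
    M ⊗[R] C →ₗ[R] M ⊗[R] (D ⊗[R] C) :=
  (TensorProduct.assoc R M D C).toLinearMap ∘ₗ rTensor C (lTensor M f ∘ₗ ρ)
    - lTensor M (rTensor C f ∘ₗ Δ)

theorem lTensor_cotensorDiff_assoc_rTensor {ρ : M →ₗ[R] M ⊗[R] C} {Δ : C →ₗ[R] C ⊗[R] C}
    (hρ : (TensorProduct.assoc R M C C).toLinearMap ∘ₗ rTensor C ρ ∘ₗ ρ = lTensor M Δ ∘ₗ ρ)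
    (f : C →ₗ[R] D) (x : M ⊗[R] C) :
    lTensor M (cotensorDiff Δ Δ f) (TensorProduct.assoc R M C C (rTensor C ρ x))
      = TensorProduct.assoc R M C (D ⊗[R] C) (rTensor (D ⊗[R] C) ρ (cotensorDiff ρ Δ f x)) := by
  induction x using TensorProduct.induction_on with
  | zero => simp
  | add x y hx hy => simp only [map_add, hx, hy]
  | tmul m c =>
    have hm : TensorProduct.assoc R M C C (rTensor C ρ (ρ m)) = lTensor M Δ (ρ m) :=
      LinearMap.congr_fun hρ m
    simp only [cotensorDiff, lTensor_sub, coe_comp, Function.comp_apply,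
      rTensor_tmul, LinearEquiv.coe_coe, LinearMap.sub_apply, map_sub, lTensor_tmul]
    congr 1
    · have hnat := congr($(lTensor_rTensor_comp_assoc (P := M) (Q := C) C (lTensor C f ∘ₗ Δ))
        (ρ m ⊗ₜ c))
      simp only [coe_comp, LinearEquiv.coe_coe, Function.comp_apply, rTensor_tmul] at hnat
      rw [lTensor_comp, comp_apply, hnat, lTensor_comp, comp_apply, ← hm]
      -- what remains is a reassociation identity, linear in `ρ m`
      generalize ρ m = s
      induction s using TensorProduct.induction_on with
      | zero => simp
      | add s t hs ht => simp [add_tmul, hs, ht]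
      | tmul n a =>
        simp only [rTensor_tmul, lTensor_tmul, assoc_tmul]
        generalize ρ n = u
        induction u using TensorProduct.induction_on with
        | zero => simp
        | add s t hs ht => simp [add_tmul, hs, ht]
        | tmul n a => simp
    · exact (map_map_assoc _ _ _ _).trans (by rw [map_tmul, map_id, id_apply, comp_apply])

theorem lTensor_counit_sub_assoc_rTensor {ρ : M →ₗ[R] M ⊗[R] C} {ε : C →ₗ[R] R}
    (hρ : ∀ m : M, TensorProduct.rid R M (lTensor M ε (ρ m)) = m) (x : M ⊗[R] C) :
    lTensor M ((TensorProduct.lid R C).toLinearMap ∘ₗ rTensor C ε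
        - (TensorProduct.rid R C).toLinearMap ∘ₗ lTensor C ε)
        (TensorProduct.assoc R M C C (rTensor C ρ x))
      = x - ρ (TensorProduct.rid R M (lTensor M ε x)) := by
  have ht (t : M ⊗[R] C) (c : C) :
      lTensor M ((TensorProduct.lid R C).toLinearMap ∘ₗ rTensor C ε
          - (TensorProduct.rid R C).toLinearMap ∘ₗ lTensor C ε)
        (TensorProduct.assoc R M C C (t ⊗ₜ c))
      = TensorProduct.rid R M (lTensor M ε t) ⊗ₜ c - ε c • t := by
    induction t using TensorProduct.induction_on with
    | zero => simp
    | add u v hu hv =>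
      simp only [add_tmul, map_add, hu, hv, smul_add]
      abel
    | tmul n a =>
      simp only [assoc_tmul, lTensor_tmul, LinearMap.sub_apply, coe_comp, LinearEquiv.coe_coe,
        Function.comp_apply, rTensor_tmul, lid_tmul, rid_tmul, tmul_sub, tmul_smul]
      rw [TensorProduct.smul_tmul']
  induction x using TensorProduct.induction_on with
  | zero => simp
  | add x y hx hy =>
    simp only [map_add, hx, hy]
    abel
  | tmul m c => rw [rTensor_tmul, ht, hρ, lTensor_tmul, rid_tmul, map_smul]

end Cotensor

/-- Let `φ : C → D` be a coalgebra map satisfying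
`Σ ε(aⁱ) bⁱ = Σ aⁱ ε(bⁱ)` on `C □_D C`. Then for every right `C`-comodule `M`,
the map `ν_M : M □_D C → M`, `Σ mⁱ ⊗ cⁱ ↦ Σ mⁱ ε(cⁱ)`, is a morphism of right
`C`-comodules, where `M □_D C` has the coaction
`Σ mⁱ ⊗ cⁱ ↦ Σ (mⁱ ⊗ cⁱ₍₁₎) ⊗ cⁱ₍₂₎`. -/
theorem nu_is_comodule_map
    {k : Type*} [Field k]
    {C : Type*} [AddCommGroup C] [Module k C] [Coalgebra k C]
    {D : Type*} [AddCommGroup D] [Module k D] [Coalgebra k D]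
    (φ : C →ₗc[k] D)
    -- the cotensor product C □_D C and the counit-symmetry hypothesis
    (cotCC : Submodule k (C ⊗[k] C))
    (hcotCC : cotCC = LinearMap.ker
      ((TensorProduct.assoc k C D C).toLinearMap ∘ₗ
        (LinearMap.rTensor C ((LinearMap.lTensor C φ.toLinearMap) ∘ₗ
          Coalgebra.comul))
        - LinearMap.lTensor C ((LinearMap.rTensor C φ.toLinearMap) ∘ₗ
            Coalgebra.comul)))
    (hsymm : ∀ x ∈ cotCC,
      ((TensorProduct.lid k C).toLinearMap ∘ₗ
        LinearMap.rTensor C (Coalgebra.counit (R := k) (A := C))) x =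
      ((TensorProduct.rid k C).toLinearMap ∘ₗ
        LinearMap.lTensor C (Coalgebra.counit (R := k) (A := C))) x)
    -- a right C-comodule M
    {M : Type*} [AddCommGroup M] [Module k M]
    (ρM : M →ₗ[k] M ⊗[k] C)
    (hcounit : ∀ m : M, (TensorProduct.rid k M)
      ((LinearMap.lTensor M (Coalgebra.counit (R := k) (A := C))) (ρM m)) = m)
    (hcoassoc : (TensorProduct.assoc k M C C).toLinearMap ∘ₗ
        LinearMap.rTensor C ρM ∘ₗ ρM
      = LinearMap.lTensor M (Coalgebra.comul (R := k) (A := C)) ∘ₗ ρM)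
    -- the cotensor product M □_D C
    (cotMC : Submodule k (M ⊗[k] C))
    (hcotMC : cotMC = LinearMap.ker
      ((TensorProduct.assoc k M D C).toLinearMap ∘ₗ
        (LinearMap.rTensor C ((LinearMap.lTensor M φ.toLinearMap) ∘ₗ ρM))
        - LinearMap.lTensor M ((LinearMap.rTensor C φ.toLinearMap) ∘ₗ
            Coalgebra.comul)))
    -- the map ν_M(Σ mⁱ ⊗ cⁱ) = Σ mⁱ ε(cⁱ)
    (ν : M ⊗[k] C →ₗ[k] M)
    (hν : ν = (TensorProduct.rid k M).toLinearMap ∘ₗ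
      LinearMap.lTensor M (Coalgebra.counit (R := k) (A := C)))
    -- the right C-comodule structure on M □_D C
    (σ : M ⊗[k] C →ₗ[k] (M ⊗[k] C) ⊗[k] C)
    (hσ : σ = (TensorProduct.assoc k M C C).symm.toLinearMap ∘ₗ
      LinearMap.lTensor M (Coalgebra.comul (R := k) (A := C))) :
    -- ν_M is C-colinear on M □_D C
    ∀ x ∈ cotMC, ρM (ν x) = (LinearMap.rTensor C ν) (σ x) := by
  subst hcotCC hcotMC hν hσ
  intro x hx
  have hker : ker (cotensorDiff Coalgebra.comul Coalgebra.comul φ.toLinearMap) ≤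
      ker ((TensorProduct.lid k C).toLinearMap ∘ₗ rTensor C Coalgebra.counit
        - (TensorProduct.rid k C).toLinearMap ∘ₗ lTensor C Coalgebra.counit) :=
    fun y hy ↦ sub_eq_zero.mpr (hsymm y hy)
  have hx' : cotensorDiff ρM Coalgebra.comul φ.toLinearMap x = 0 := hx
  have hfix : x - ρM (TensorProduct.rid k M (lTensor M Coalgebra.counit x)) = 0 := by
    rw [← lTensor_counit_sub_assoc_rTensor hcounit]
    refine lTensor_apply_eq_zero_of_ker_le hker ?_
    rw [lTensor_cotensorDiff_assoc_rTensor hcoassoc, hx', map_zero, map_zero]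
  simp only [coe_comp, LinearEquiv.coe_coe, Function.comp_apply,
    rTensor_counit_assoc_symm_lTensor_comul]
  exact (sub_eq_zero.mp hfix).symm
end

section
/- Let φ: C → D be a coalgebra map. If Σ ε(aⁱ) bⁱ = Σ aⁱ ε(bⁱ) for all Σ aⁱ ⊗ bⁱ ∈ C □_D C, then the map Δ_C: C → C □_D C is surjective (hence bijective). -/
/-!
Let `δ : C ⊗ M → C ⊗ (C ⊗ M)` be `Δ ⊗ id` followed by reassociation. The subspace `C □_D C` is the
kernel of `L = (id ⊗ φ ⊗ id) ∘ (δ - id ⊗ Δ)`, and by coassociativity `L` intertwines `δ` on its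
source and target. Hence for `x ∈ C □_D C` the element `δ x` is killed by `id_C ⊗ L`, so over a
field it lies in `C ⊗ (C □_D C)`, where `id_C ⊗ (ε ⊗ id - id ⊗ ε)` vanishes by hypothesis.
By counitality this map sends `δ x` to `x - Δ ((id ⊗ ε) x)`.
-/

open TensorProduct LinearMap

lemma LinearMap.ker_lTensor_le_ker_lTensor {R M N P Q : Type*} [CommRing R]
    [AddCommGroup M] [Module R M] [Module.Flat R M] [AddCommGroup N] [Module R N]
    [AddCommGroup P] [Module R P] [AddCommGroup Q] [Module R Q]
    {L : N →ₗ[R] P} {S : N →ₗ[R] Q} (h : ker L ≤ ker S) :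
    ker (L.lTensor M) ≤ ker (S.lTensor M) := by
  intro z hz
  obtain ⟨w, rfl⟩ := (Module.Flat.lTensor_exact M (exact_subtype_ker_map L) z).mp hz
  have hS : S ∘ₗ (ker L).subtype = 0 := by
    ext ⟨y, hy⟩
    exact h hy
  rw [mem_ker, ← comp_apply, ← lTensor_comp, hS, lTensor_zero, zero_apply]

section CofreeCoaction

variable {R C M N : Type*} [CommSemiring R] [AddCommMonoid C] [Module R C] [Coalgebra R C]
  [AddCommMonoid M] [Module R M] [AddCommMonoid N] [Module R N]

variable (R C M) in
def cofreeCoaction : C ⊗[R] M →ₗ[R] C ⊗[R] (C ⊗[R] M) :=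
  (TensorProduct.assoc R C C M).toLinearMap ∘ₗ (Coalgebra.comul (R := R) (A := C)).rTensor M

@[simp]
lemma cofreeCoaction_tmul (c : C) (m : M) :
    cofreeCoaction R C M (c ⊗ₜ m) = TensorProduct.assoc R C C M (Coalgebra.comul c ⊗ₜ m) :=
  rfl

lemma cofreeCoaction_comp_comul :
    cofreeCoaction R C C ∘ₗ Coalgebra.comul = Coalgebra.comul.lTensor C ∘ₗ Coalgebra.comul :=
  Coalgebra.coassoc

lemma lTensor_lTensor_comp_cofreeCoaction (f : M →ₗ[R] N) :
    (f.lTensor C).lTensor C ∘ₗ cofreeCoaction R C M = cofreeCoaction R C N ∘ₗ f.lTensor C := by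
  ext c m
  simp only [AlgebraTensorModule.curry_apply, curry_apply, coe_restrictScalars, coe_comp,
    Function.comp_apply, cofreeCoaction_tmul, lTensor_tmul]
  generalize Coalgebra.comul (R := R) c = y
  induction y using TensorProduct.induction_on <;> simp_all [add_tmul]

lemma assoc_comp_rTensor_lTensor_comp_comul (g : C →ₗ[R] N) :
    (TensorProduct.assoc R C N M).toLinearMap ∘ₗ (g.lTensor C ∘ₗ Coalgebra.comul).rTensor M =
      (g.rTensor M).lTensor C ∘ₗ cofreeCoaction R C M := by
  ext c m
  simp only [AlgebraTensorModule.curry_apply, curry_apply, coe_restrictScalars, coe_comp,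
    LinearEquiv.coe_coe, Function.comp_apply, rTensor_tmul, cofreeCoaction_tmul]
  generalize Coalgebra.comul (R := R) c = y
  induction y using TensorProduct.induction_on <;> simp_all [add_tmul]

lemma lTensor_cofreeCoaction_comp_cofreeCoaction :
    (cofreeCoaction R C M).lTensor C ∘ₗ cofreeCoaction R C M =
      cofreeCoaction R C (C ⊗[R] M) ∘ₗ cofreeCoaction R C M := by
  set Φ : (C ⊗[R] (C ⊗[R] C)) ⊗[R] M →ₗ[R] C ⊗[R] (C ⊗[R] (C ⊗[R] M)) :=
    (TensorProduct.assoc R C C M).toLinearMap.lTensor C ∘ₗ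
      (TensorProduct.assoc R C (C ⊗[R] C) M).toLinearMap
  ext c m
  have hl (y : C ⊗[R] C) :
      (cofreeCoaction R C M).lTensor C (TensorProduct.assoc R C C M (y ⊗ₜ m)) =
        Φ (Coalgebra.comul.lTensor C y ⊗ₜ m) := by
    induction y using TensorProduct.induction_on <;> simp_all [Φ, add_tmul]
  have hr (y : C ⊗[R] C) :
      cofreeCoaction R C (C ⊗[R] M) (TensorProduct.assoc R C C M (y ⊗ₜ m)) =
        Φ (TensorProduct.assoc R C C C (Coalgebra.comul.rTensor C y) ⊗ₜ m) := by
    induction y using TensorProduct.induction_on with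
    | zero => simp
    | add => simp_all [add_tmul]
    | tmul a b =>
      simp only [cofreeCoaction_tmul, assoc_tmul, rTensor_tmul, Φ, coe_comp, LinearEquiv.coe_coe,
        Function.comp_apply]
      generalize Coalgebra.comul (R := R) a = w
      induction w using TensorProduct.induction_on <;> simp_all [add_tmul]
  simp only [AlgebraTensorModule.curry_apply, curry_apply, coe_restrictScalars, coe_comp,
    Function.comp_apply, cofreeCoaction_tmul, hl, hr, Coalgebra.coassoc_apply]

lemma lTensor_lid_rTensor_counit_comp_cofreeCoaction :
    ((TensorProduct.lid R M).toLinearMap ∘ₗ Coalgebra.counit.rTensor M).lTensor C ∘ₗ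
      cofreeCoaction R C M = .id := by
  ext c m
  have h (y : C ⊗[R] C) :
      ((TensorProduct.lid R M).toLinearMap ∘ₗ Coalgebra.counit.rTensor M).lTensor C
          (TensorProduct.assoc R C C M (y ⊗ₜ m)) =
        TensorProduct.rid R C (Coalgebra.counit.lTensor C y) ⊗ₜ m := by
    induction y using TensorProduct.induction_on <;> simp_all [add_tmul, smul_tmul']
  simp [h]

lemma lTensor_rid_lTensor_comp_cofreeCoaction (g : M →ₗ[R] R) :
    ((TensorProduct.rid R C).toLinearMap ∘ₗ g.lTensor C).lTensor C ∘ₗ cofreeCoaction R C M =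
      Coalgebra.comul ∘ₗ (TensorProduct.rid R C).toLinearMap ∘ₗ g.lTensor C := by
  ext c m
  simp only [AlgebraTensorModule.curry_apply, curry_apply, coe_restrictScalars, coe_comp,
    LinearEquiv.coe_coe, Function.comp_apply, cofreeCoaction_tmul, lTensor_tmul, rid_tmul,
    map_smul]
  generalize Coalgebra.comul (R := R) c = y
  induction y using TensorProduct.induction_on <;> simp_all [add_tmul, smul_tmul']

end CofreeCoaction

lemma lTensor_lTensor_comp_sub_comp_cofreeCoaction {R C P : Type*} [CommRing R] [AddCommGroup C]
    [Module R C] [Coalgebra R C] [AddCommGroup P] [Module R P] (h : C ⊗[R] C →ₗ[R] P) :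
    (h.lTensor C ∘ₗ (cofreeCoaction R C C - Coalgebra.comul.lTensor C)).lTensor C ∘ₗ
        cofreeCoaction R C C =
      cofreeCoaction R C P ∘ₗ h.lTensor C ∘ₗ (cofreeCoaction R C C - Coalgebra.comul.lTensor C) := by
  rw [lTensor_comp, lTensor_sub, comp_assoc, sub_comp, lTensor_cofreeCoaction_comp_cofreeCoaction,
    lTensor_lTensor_comp_cofreeCoaction, ← comp_sub, ← comp_assoc,
    lTensor_lTensor_comp_cofreeCoaction, comp_assoc]

/-- If `Σ ε(aⁱ) bⁱ = Σ aⁱ ε(bⁱ)` for all `Σ aⁱ ⊗ bⁱ ∈ C □_D C`,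
then `Δ_C : C → C □_D C` is surjective (it lands in `C □_D C` since `φ` is a
coalgebra map, and every element of `C □_D C` is of the form `Δ_C c`). -/
theorem comul_surjective_onto_cotensor_of_counit_symm
    {k : Type*} [Field k]
    {C : Type*} [AddCommGroup C] [Module k C] [Coalgebra k C]
    {D : Type*} [AddCommGroup D] [Module k D] [Coalgebra k D]
    (φ : C →ₗc[k] D)
    (ρr : C →ₗ[k] C ⊗[k] D)
    (hρr : ρr = (LinearMap.lTensor C φ.toLinearMap) ∘ₗ Coalgebra.comul)
    (ρl : C →ₗ[k] D ⊗[k] C)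
    (hρl : ρl = (LinearMap.rTensor C φ.toLinearMap) ∘ₗ Coalgebra.comul)
    (cot : Submodule k (C ⊗[k] C))
    (hcot : cot = LinearMap.ker
      ((TensorProduct.assoc k C D C).toLinearMap ∘ₗ (LinearMap.rTensor C ρr)
        - LinearMap.lTensor C ρl))
    -- hypothesis: Σ ε(aⁱ) bⁱ = Σ aⁱ ε(bⁱ) on C □_D C
    (hsymm : ∀ x ∈ cot,
      ((TensorProduct.lid k C).toLinearMap ∘ₗ
        LinearMap.rTensor C (Coalgebra.counit (R := k) (A := C))) x =
      ((TensorProduct.rid k C).toLinearMap ∘ₗ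
        LinearMap.lTensor C (Coalgebra.counit (R := k) (A := C))) x) :
    (∀ c : C, Coalgebra.comul (R := k) c ∈ cot) ∧
      (∀ x ∈ cot, ∃ c : C, Coalgebra.comul (R := k) c = x) := by
  set L := (φ.toLinearMap.rTensor C).lTensor C ∘ₗ
    (cofreeCoaction k C C - Coalgebra.comul.lTensor C) with hL
  have hcot_eq : cot = ker L := by
    rw [hcot, hL, comp_sub, hρr, hρl, assoc_comp_rTensor_lTensor_comp_comul, lTensor_comp]
  subst hcot_eq
  refine ⟨fun c => ?_, fun x hx => ⟨TensorProduct.rid k C (Coalgebra.counit.lTensor C x), ?_⟩⟩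
  · rw [mem_ker, hL, comp_apply, LinearMap.sub_apply, ← comp_apply (f := cofreeCoaction k C C),
      cofreeCoaction_comp_comul, comp_apply, sub_self, map_zero]
  · have hker : ker L ≤ ker ((TensorProduct.lid k C).toLinearMap ∘ₗ Coalgebra.counit.rTensor C -
        (TensorProduct.rid k C).toLinearMap ∘ₗ Coalgebra.counit.lTensor C) :=
      fun y hy => sub_eq_zero.mpr (hsymm y hy)
    have hδx : cofreeCoaction k C C x ∈ ker (L.lTensor C) := by
      rw [mem_ker, ← comp_apply, hL, lTensor_lTensor_comp_sub_comp_cofreeCoaction, ← hL,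
        comp_apply, mem_ker.mp hx, map_zero]
    have hSδx := ker_lTensor_le_ker_lTensor hker hδx
    rw [mem_ker, lTensor_sub, LinearMap.sub_apply, sub_eq_zero] at hSδx
    calc Coalgebra.comul (TensorProduct.rid k C (Coalgebra.counit.lTensor C x))
        = _ := (LinearMap.congr_fun (lTensor_rid_lTensor_comp_cofreeCoaction _) x).symm
      _ = _ := hSδx.symm
      _ = x := LinearMap.congr_fun lTensor_lid_rTensor_counit_comp_cofreeCoaction x
end

section
/- Let φ: C → D be a coalgebra map such that Δ_C: C → C □_D C is surjective. Then φ is a monomorphism in the category of k-coalgebras: for any coalgebra E and coalgebra maps f, g: E → C with φ∘f = φ∘g, one has f = g. -/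
/-!
If `f, g : E → C` are coalgebra maps with `φ ∘ f = φ ∘ g`, coassociativity of `Δ_E` shows that
`(f ⊗ g)(Δ_E e)` lies in `C □_D C`, so by surjectivity it equals `Δ_C c` for some `c`. Applying
`id ⊗ ε` and `ε ⊗ id` and using counitality of `f`, `g` and `C` gives `f e = c = g e`.
-/

open TensorProduct LinearMap

section

variable {R C E M : Type*} [CommRing R] [AddCommGroup C] [Module R C] [Coalgebra R C]
  [AddCommMonoid E] [Module R E] [Coalgebra R E] [AddCommGroup M] [Module R M]

/-- The cotensor product `C □_M C` of `C` with itself, for the two coactions induced by `φ`. -/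
def Coalgebra.cotensorSelf (φ : C →ₗ[R] M) : Submodule R (C ⊗[R] C) :=
  ker ((_root_.TensorProduct.assoc R C M C).toLinearMap ∘ₗ
      rTensor C (lTensor C φ ∘ₗ Coalgebra.comul) - lTensor C (rTensor C φ ∘ₗ Coalgebra.comul))

theorem CoalgHom.map_comul_mem_cotensorSelf (φ : C →ₗ[R] M) (f g : E →ₗc[R] C)
    (h : φ ∘ₗ f.toLinearMap = φ ∘ₗ g.toLinearMap) (e : E) :
    map f.toLinearMap g.toLinearMap (Coalgebra.comul e) ∈ Coalgebra.cotensorSelf φ := by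
  have right_coaction :
      LinearMap.rTensor C (LinearMap.lTensor C φ ∘ₗ Coalgebra.comul) ∘ₗ
          map f.toLinearMap g.toLinearMap =
        map (map f.toLinearMap (φ ∘ₗ f.toLinearMap)) g.toLinearMap ∘ₗ
          LinearMap.rTensor E Coalgebra.comul := by
    rw [rTensor_comp_map, LinearMap.comp_assoc, ← f.map_comp_comul, ← LinearMap.comp_assoc,
      lTensor_comp_map, LinearMap.rTensor, ← map_comp, LinearMap.comp_id]
  have left_coaction :
      LinearMap.lTensor C (LinearMap.rTensor C φ ∘ₗ Coalgebra.comul) ∘ₗ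
          map f.toLinearMap g.toLinearMap =
        map f.toLinearMap (map (φ ∘ₗ g.toLinearMap) g.toLinearMap) ∘ₗ
          LinearMap.lTensor E Coalgebra.comul := by
    rw [lTensor_comp_map, LinearMap.comp_assoc, ← g.map_comp_comul, ← LinearMap.comp_assoc,
      rTensor_comp_map, LinearMap.lTensor, ← map_comp, LinearMap.comp_id]
  rw [Coalgebra.cotensorSelf, mem_ker, LinearMap.sub_apply, sub_eq_zero, LinearMap.comp_apply,
    LinearEquiv.coe_coe, ← LinearMap.comp_apply (LinearMap.rTensor C _), right_coaction,
    ← LinearMap.comp_apply (LinearMap.lTensor C _), left_coaction, LinearMap.comp_apply,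
    LinearMap.comp_apply, ← map_map_assoc, Coalgebra.coassoc_apply, h]

end

theorem CoalgHom.eq_of_map_comul_eq_comul {R C E : Type*} [CommSemiring R] [AddCommMonoid C]
    [Module R C] [Coalgebra R C] [AddCommMonoid E] [Module R E] [Coalgebra R E]
    (f g : E →ₗc[R] C) {e : E} {c : C}
    (h : map f.toLinearMap g.toLinearMap (Coalgebra.comul e) = Coalgebra.comul c) :
    f e = g e := by
  have hf : f e ⊗ₜ[R] (1 : R) = c ⊗ₜ[R] 1 := by
    rw [← Coalgebra.lTensor_counit_comul c, ← h, ← LinearMap.comp_apply, lTensor_comp_map,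
      g.counit_comp, ← rTensor_comp_lTensor, LinearMap.comp_apply,
      Coalgebra.lTensor_counit_comul, rTensor_tmul]
    rfl
  have hg : (1 : R) ⊗ₜ[R] g e = 1 ⊗ₜ[R] c := by
    rw [← Coalgebra.rTensor_counit_comul c, ← h, ← LinearMap.comp_apply, rTensor_comp_map,
      f.counit_comp, ← lTensor_comp_rTensor, LinearMap.comp_apply,
      Coalgebra.rTensor_counit_comul, lTensor_tmul]
    rfl
  have hfc : f e = c := by simpa using congr(TensorProduct.rid R C $hf)
  have hgc : g e = c := by simpa using congr(TensorProduct.lid R C $hg)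
  rw [hfc, hgc]

/-- If `Δ_C : C → C □_D C` is surjective, then `φ` is a
monomorphism in the category of `k`-coalgebras: for any coalgebra `E`
and coalgebra maps `f, g : E → C` with `φ ∘ f = φ ∘ g` one has `f = g`. -/
theorem mono_of_comul_surjective_onto_cotensor
    {k : Type*} [Field k]
    {C : Type*} [AddCommGroup C] [Module k C] [Coalgebra k C]
    {D : Type*} [AddCommGroup D] [Module k D] [Coalgebra k D]
    (φ : C →ₗc[k] D)
    (ρr : C →ₗ[k] C ⊗[k] D)
    (hρr : ρr = (LinearMap.lTensor C φ.toLinearMap) ∘ₗ Coalgebra.comul)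
    (ρl : C →ₗ[k] D ⊗[k] C)
    (hρl : ρl = (LinearMap.rTensor C φ.toLinearMap) ∘ₗ Coalgebra.comul)
    (cot : Submodule k (C ⊗[k] C))
    (hcot : cot = LinearMap.ker
      ((TensorProduct.assoc k C D C).toLinearMap ∘ₗ (LinearMap.rTensor C ρr)
        - LinearMap.lTensor C ρl))
    -- hypothesis: Δ_C : C → C □_D C is surjective
    (hsurj : ∀ x ∈ cot, ∃ c : C, Coalgebra.comul (R := k) c = x) :
    ∀ (E : Type*) [AddCommGroup E] [Module k E] [Coalgebra k E]
      (f g : E →ₗc[k] C), φ.comp f = φ.comp g → f = g := by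
  intro E _ _ _ f g hfg
  subst hρr hρl hcot
  ext e
  obtain ⟨c, hc⟩ :=
    hsurj _ (f.map_comul_mem_cotensorSelf φ.toLinearMap g congr(($hfg).toLinearMap) e)
  exact f.eq_of_map_comul_eq_comul g hc.symm
end

section
/- Let φ: C → D be a coalgebra map with kernel Ker(φ) (a coideal of C, hence a (C,C)-bicomodule, in particular a left C- and hence left D-comodule). If C □_D C ≅ C via Δ_C (i.e., Δ_C: C → C □_D C is surjective), then C □_D Ker(φ) = 0. -/
open TensorProduct LinearMap

/-!
An element `x` of `C □_D Ker φ` lands in `C □_D C` under `C ⊗ Ker φ → C ⊗ C`, so its image is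
`Δ c` for some `c`. Its second tensor factor lies in `Ker φ`, so `(1 ⊗ φ) (Δ c) = 0`; applying
`1 ⊗ ε_D` and using `ε_D ∘ φ = ε_C` gives `c ⊗ 1 = 0`, i.e. `c = 0`. Over a field the map
`C ⊗ Ker φ → C ⊗ C` is injective, hence `x = 0`.
-/

theorem CoalgHom.eq_zero_of_lTensor_comul_eq_zero {R C D : Type*} [CommSemiring R]
    [AddCommMonoid C] [Module R C] [Coalgebra R C] [AddCommMonoid D] [Module R D]
    [Coalgebra R D] (φ : C →ₗc[R] D) {c : C}
    (hc : LinearMap.lTensor C φ.toLinearMap (Coalgebra.comul c) = 0) : c = 0 := by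
  have h : c ⊗ₜ[R] (1 : R) = 0 := by
    rw [← Coalgebra.lTensor_counit_comul, ← φ.counit_comp, LinearMap.lTensor_comp,
      LinearMap.comp_apply, hc, map_zero]
  simpa using congrArg (TensorProduct.rid R C) h

theorem assoc_rTensor_comp_lTensor {R M N P D : Type*} [CommSemiring R]
    [AddCommMonoid M] [Module R M] [AddCommMonoid N] [Module R N] [AddCommMonoid P] [Module R P]
    [AddCommMonoid D] [Module R D] (ρ : M →ₗ[R] M ⊗[R] D) (g : P →ₗ[R] N) :
    ((TensorProduct.assoc R M D N).toLinearMap ∘ₗ rTensor N ρ) ∘ₗ lTensor M g =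
      lTensor M (lTensor D g) ∘ₗ (TensorProduct.assoc R M D P).toLinearMap ∘ₗ rTensor P ρ := by
  rw [comp_assoc, rTensor_comp_lTensor, ← lTensor_comp_rTensor, lTensor_tensor]
  ext
  simp

/-- The defining condition of `M □_D P`, where `P` is a left `D`-comodule only through
`g : P → N`, is the pullback along `1 ⊗ g` of the defining condition of `M □_D N`. -/
theorem ker_cotensor_comp_eq_comap_lTensor {R M N P D : Type*} [CommSemiring R]
    [AddCommGroup M] [Module R M] [AddCommGroup N] [Module R N] [AddCommGroup P] [Module R P]
    [AddCommGroup D] [Module R D]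
    (ρr : M →ₗ[R] M ⊗[R] D) (ρl : N →ₗ[R] D ⊗[R] N) (g : P →ₗ[R] N) :
    ker (lTensor M (lTensor D g) ∘ₗ (TensorProduct.assoc R M D P).toLinearMap ∘ₗ rTensor P ρr
        - lTensor M (ρl ∘ₗ g)) =
      (ker ((TensorProduct.assoc R M D N).toLinearMap ∘ₗ rTensor N ρr - lTensor M ρl)).comap
        (lTensor M g) := by
  rw [← ker_comp, sub_comp, assoc_rTensor_comp_lTensor, lTensor_comp]

theorem cotensor_with_kernel_trivial_general
    {k : Type*} [Field k]
    {C : Type*} [AddCommGroup C] [Module k C] [Coalgebra k C]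
    {D : Type*} [AddCommGroup D] [Module k D] [Coalgebra k D]
    (φ : C →ₗc[k] D)
    -- the right D-comodule structure on C via φ
    (ρr : C →ₗ[k] C ⊗[k] D)
    -- the left D-comodule structure on C via φ
    (ρl : C →ₗ[k] D ⊗[k] C)
    -- the cotensor product C □_D C
    (cot : Submodule k (C ⊗[k] C))
    (hcot : cot = LinearMap.ker
      ((TensorProduct.assoc k C D C).toLinearMap ∘ₗ (LinearMap.rTensor C ρr)
        - LinearMap.lTensor C ρl))
    -- hypothesis: Δ_C : C → C □_D C is surjective
    (hsurj : ∀ x ∈ cot, ∃ c : C, Coalgebra.comul (R := k) c = x)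
    -- the cotensor product C □_D Ker(φ), cut out inside C ⊗ Ker(φ) by the
    -- condition Σ aⁱ₍₁₎ ⊗ φ(aⁱ₍₂₎) ⊗ nⁱ = Σ aⁱ ⊗ (φ ⊗ I)(Δ_C nⁱ)
    (cotK : Submodule k (C ⊗[k] (LinearMap.ker φ.toLinearMap)))
    (hcotK : cotK = LinearMap.ker
      (LinearMap.lTensor C
          (LinearMap.lTensor D (LinearMap.ker φ.toLinearMap).subtype) ∘ₗ
        (TensorProduct.assoc k C D (LinearMap.ker φ.toLinearMap)).toLinearMap ∘ₗ
        LinearMap.rTensor (LinearMap.ker φ.toLinearMap) ρr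
      - LinearMap.lTensor C (ρl ∘ₗ (LinearMap.ker φ.toLinearMap).subtype))) :
    cotK = ⊥ := by
  subst hcot hcotK
  rw [ker_cotensor_comp_eq_comap_lTensor, Submodule.eq_bot_iff]
  intro x hx
  obtain ⟨c, hc⟩ := hsurj _ hx
  have hc0 : c = 0 := φ.eq_zero_of_lTensor_comul_eq_zero <| by
    rw [hc, ← comp_apply, ← lTensor_comp, comp_ker_subtype, lTensor_zero, LinearMap.zero_apply]
  have hinj : Function.Injective (lTensor C (ker φ.toLinearMap).subtype) :=
    Module.Flat.lTensor_preserves_injective_linearMap _ (Submodule.injective_subtype _)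
  exact hinj (by rw [← hc, hc0, map_zero, map_zero])

/-- Let `φ : C → D` be a coalgebra map and suppose
`Δ_C : C → C □_D C` is surjective. Then `C □_D Ker(φ) = 0`, where `Ker(φ)` is
a left `D`-comodule via `n ↦ (φ ⊗ I)(Δ_C n)`. -/
theorem cotensor_with_kernel_trivial
    {k : Type*} [Field k]
    {C : Type*} [AddCommGroup C] [Module k C] [Coalgebra k C]
    {D : Type*} [AddCommGroup D] [Module k D] [Coalgebra k D]
    (φ : C →ₗc[k] D)
    -- the right D-comodule structure on C via φ
    (ρr : C →ₗ[k] C ⊗[k] D)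
    (hρr : ρr = (LinearMap.lTensor C φ.toLinearMap) ∘ₗ Coalgebra.comul)
    -- the left D-comodule structure on C via φ
    (ρl : C →ₗ[k] D ⊗[k] C)
    (hρl : ρl = (LinearMap.rTensor C φ.toLinearMap) ∘ₗ Coalgebra.comul)
    -- the cotensor product C □_D C
    (cot : Submodule k (C ⊗[k] C))
    (hcot : cot = LinearMap.ker
      ((TensorProduct.assoc k C D C).toLinearMap ∘ₗ (LinearMap.rTensor C ρr)
        - LinearMap.lTensor C ρl))
    -- hypothesis: Δ_C : C → C □_D C is surjective
    (hsurj : ∀ x ∈ cot, ∃ c : C, Coalgebra.comul (R := k) c = x)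
    -- the cotensor product C □_D Ker(φ), cut out inside C ⊗ Ker(φ) by the
    -- condition Σ aⁱ₍₁₎ ⊗ φ(aⁱ₍₂₎) ⊗ nⁱ = Σ aⁱ ⊗ (φ ⊗ I)(Δ_C nⁱ)
    (cotK : Submodule k (C ⊗[k] (LinearMap.ker φ.toLinearMap)))
    (hcotK : cotK = LinearMap.ker
      (LinearMap.lTensor C
          (LinearMap.lTensor D (LinearMap.ker φ.toLinearMap).subtype) ∘ₗ
        (TensorProduct.assoc k C D (LinearMap.ker φ.toLinearMap)).toLinearMap ∘ₗ
        LinearMap.rTensor (LinearMap.ker φ.toLinearMap) ρr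
      - LinearMap.lTensor C (ρl ∘ₗ (LinearMap.ker φ.toLinearMap).subtype))) :
    cotK = ⊥ :=
  cotensor_with_kernel_trivial_general φ ρr ρl cot hcot hsurj cotK hcotK
end
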